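/- Let Q be a finite acyclic quiver and R a quasi-Frobenius ring. A representation M ∈ Rep(Q,R) is monic if and only if M has the following lifting property: for every morphism p : X → Y in Rep(Q,R) such that for each vertex j the component p_j : X_j → Y_j is surjective and a stable equivalence of R-modules, and for every morphism q : M → Y, there exists a morphism h : M → X in Rep(Q,R) with p ∘ h = q. -/

import Mathlib

open CategoryTheory CategoryTheory.Limits

/-- An `R`-linear map factors through a projective `R`-module. -/
def FactorsThroughProjective (R : Type) [Ring R] {M N : Type} [AddCommGroup M] [Module R M]
    [AddCommGroup N] [Module R N] (f : M →ₗ[R] N) : Prop :=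
  ∃ (P : Type) (_ : AddCommGroup P) (_ : Module R P) (_ : Module.Projective R P)
    (a : M →ₗ[R] P) (b : P →ₗ[R] N), b ∘ₗ a = f

/-- An `R`-linear map is a stable equivalence if it becomes an isomorphism in the stable
module category: there is `g` in the other direction such that `g ∘ f - id` and `f ∘ g - id`
each factor through a projective module. -/
def IsStableEquiv (R : Type) [Ring R] {M N : Type} [AddCommGroup M] [Module R M]
    [AddCommGroup N] [Module R N] (f : M →ₗ[R] N) : Prop :=
  ∃ g : N →ₗ[R] M,
    FactorsThroughProjective R (g ∘ₗ f - LinearMap.id) ∧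
    FactorsThroughProjective R (f ∘ₗ g - LinearMap.id)

/-- A quasi-Frobenius ring: left and right Noetherian, and injective over itself
as a left and as a right module. -/
class IsQuasiFrobenius (R : Type) [Ring R] : Prop where
  noetherian_left : IsNoetherianRing R
  noetherian_right : IsNoetherianRing Rᵐᵒᵖ
  selfInjective_left : Module.Injective R R
  selfInjective_right : Module.Injective Rᵐᵒᵖ Rᵐᵒᵖ

/-- The category of representations of a quiver `V` over a ring `R`:
functors from the free path category on `V` to `R`-modules. -/
abbrev QuivRep (R : Type) [Ring R] (V : Type) [Quiver.{1} V] : Type _ :=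
  Paths V ⥤ ModuleCat.{0} R

namespace QuivRep

variable {R : Type} [Ring R] {V : Type} [Quiver.{1} V]

/-- The `R`-module of a representation at a vertex `j`. -/
abbrev vtx (M : QuivRep R V) (j : V) : ModuleCat R := M.obj ((Paths.of V).obj j)

/-- The structure map of a representation along an arrow `a : i ⟶ j`. -/
abbrev arrowMap (M : QuivRep R V) {i j : V} (a : i ⟶ j) : M.vtx i ⟶ M.vtx j :=
  M.map ((Paths.of V).map a)

/-- The component at a vertex `j` of a morphism of representations. -/
abbrev app {M N : QuivRep R V} (f : M ⟶ N) (j : V) : ↥(M.vtx j) →ₗ[R] ↥(N.vtx j) := (f.app ((Paths.of V).obj j)).hom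

/-- A representation is monic if, at each vertex `j`, the natural map
`⊕_{a : i ⟶ j} M_i → M_j`, `(x_a) ↦ Σ_a m_a (x_a)`, is injective. -/
def IsMonic (M : QuivRep R V) : Prop :=
  ∀ j : V,
    letI : DecidableEq (Σ i : V, i ⟶ j) := Classical.decEq _
    Function.Injective
      (DirectSum.toModule R (Σ i : V, i ⟶ j) (M.vtx j)
        (fun a => ((M.arrowMap a.2).hom : ↥(M.vtx a.1) →ₗ[R] ↥(M.vtx j))))

/-- A representation is RI-fibrant if, at each vertex `j`, the natural map
`M_j → ∏_{a : j ⟶ i} M_i`, `x ↦ (m_a x)_a`, is surjective. -/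
def IsRIFibrant (M : QuivRep R V) : Prop :=
  ∀ j : V,
    Function.Surjective
      (LinearMap.pi
        (fun a : Σ i : V, (j ⟶ i) => ((M.arrowMap a.2).hom : ↥(M.vtx j) →ₗ[R] ↥(M.vtx a.1))))

end QuivRep

/-- A quiver is finite and acyclic: finitely many vertices and arrows, and the only
paths from a vertex to itself are trivial. -/
def IsFiniteAcyclic (V : Type) [Quiver.{1} V] : Prop :=
  Nonempty (Fintype V) ∧ (∀ i j : V, Nonempty (Fintype (i ⟶ j))) ∧
    ∀ (i : V) (p : Quiver.Path i i), p.length = 0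

/-!
Over a quasi-Frobenius ring projective modules are injective, so a surjective stable equivalence
splits with injective (indeed projective) kernel. If `M` is monic, a lift is built vertex by
vertex along the acyclic quiver: at `k` the lifts already chosen at the sources of the arrows
into `k` define a map on `⊕_{a : i ⟶ k} M_i`, which extends along the injection into `M_k`
because `ker p_k` is injective.

Conversely, if `z ≠ 0` is killed by `⊕_{a : i ⟶ j} M_i → M_j`, then, `R` being a cogenerator,
some `φ : ⊕ M_i → R` has `φ z ≠ 0`. Twisting `M × R` by `φ` along the arrows into `j` gives a
pointwise split surjection onto `M` with kernel `R`, and a lift of `𝟙 M` through it would factor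
`φ` through `⊕ M_i → M_j`.
-/

section QuasiFrobenius

variable {R : Type} [Ring R]

instance IsQuasiFrobenius.instIsNoetherianRing [IsQuasiFrobenius R] : IsNoetherianRing R :=
  IsQuasiFrobenius.noetherian_left

instance IsQuasiFrobenius.instInjectiveSelf [IsQuasiFrobenius R] : Module.Injective R R :=
  IsQuasiFrobenius.selfInjective_left

instance IsQuasiFrobenius.instInjectiveOpSelf [IsQuasiFrobenius R] : Module.Injective Rᵐᵒᵖ Rᵐᵒᵖ :=
  IsQuasiFrobenius.selfInjective_right

open MulOpposite in
/-- If the right annihilator were zero, the map `c ↦ (a c)_{a ∈ S}` would split by right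
self-injectivity, and the splitting would write `1` as a combination of the generators. -/
theorem Ideal.exists_ne_zero_forall_mul_eq_zero [Module.Injective Rᵐᵒᵖ Rᵐᵒᵖ] {I : Ideal R}
    (hI : I.FG) (hI1 : I ≠ ⊤) : ∃ c : R, c ≠ 0 ∧ ∀ a ∈ I, a * c = 0 := by
  classical
  obtain ⟨S, rfl⟩ := hI
  let ψ : Rᵐᵒᵖ →ₗ[Rᵐᵒᵖ] (S → Rᵐᵒᵖ) :=
    LinearMap.pi fun a => LinearMap.toSpanSingleton Rᵐᵒᵖ Rᵐᵒᵖ (op a.1)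
  by_cases hψ : Function.Injective ψ
  · obtain ⟨g, hg⟩ := Module.Injective.extension_property Rᵐᵒᵖ Rᵐᵒᵖ _ _ ψ hψ LinearMap.id
    have h1 : (1 : Rᵐᵒᵖ) = ∑ a : S, op a.1 * g fun b => if a = b then 1 else 0 := by
      have := LinearMap.congr_fun hg 1
      rw [LinearMap.comp_apply, LinearMap.pi_apply_eq_sum_univ g] at this
      simpa [ψ] using this.symm
    have h2 : (1 : R) = ∑ a : S, unop (g fun b => if a = b then 1 else 0) * a.1 := by
      simpa using congrArg unop h1
    refine absurd ((Ideal.eq_top_iff_one _).2 ?_) hI1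
    rw [h2]
    exact Ideal.sum_mem _ fun a _ => Ideal.mul_mem_left _ _ (Ideal.subset_span a.2)
  · obtain ⟨x, hx, hx0⟩ : ∃ x, ψ x = 0 ∧ x ≠ 0 := by
      simpa [injective_iff_map_eq_zero] using hψ
    have hspan :
        Ideal.span (S : Set R) ≤ LinearMap.ker (LinearMap.toSpanSingleton R R (unop x)) :=
      Ideal.span_le.2 fun a ha => by
        simpa [ψ] using congrArg unop (congrFun hx ⟨a, ha⟩)
    exact ⟨unop x, by simpa using hx0, fun a ha => by simpa using hspan ha⟩

theorem exists_linearMap_apply_ne_zero [IsNoetherianRing R] [Module.Injective R R]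
    [Module.Injective Rᵐᵒᵖ Rᵐᵒᵖ] {N : Type*} [AddCommGroup N] [Module R N] {z : N}
    (hz : z ≠ 0) : ∃ φ : N →ₗ[R] R, φ z ≠ 0 := by
  set I := LinearMap.ker (LinearMap.toSpanSingleton R N z)
  have hI1 : I ≠ ⊤ := (Ideal.eq_top_iff_one I).not.2 (by simpa [I] using hz)
  obtain ⟨c, hc0, hc⟩ := Ideal.exists_ne_zero_forall_mul_eq_zero (IsNoetherian.noetherian I) hI1
  obtain ⟨φ, hφ⟩ := Module.Injective.extension_property R R _ _
    (I.liftQ (LinearMap.toSpanSingleton R N z) le_rfl)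
    (by rw [← LinearMap.ker_eq_bot, Submodule.ker_liftQ_eq_bot _ _ _ le_rfl])
    (I.liftQ (LinearMap.toSpanSingleton R R c) fun a ha => by simpa using hc a ha)
  have hφz : φ z = c := by simpa using LinearMap.congr_fun hφ (Submodule.Quotient.mk 1)
  exact ⟨φ, hφz ▸ hc0⟩

theorem Module.Injective.of_retract {P F : Type} [AddCommGroup P] [Module R P] [AddCommGroup F]
    [Module R F] [Module.Injective R F] (s : P →ₗ[R] F) (π : F →ₗ[R] P)
    (h : π ∘ₗ s = LinearMap.id) : Module.Injective R P where
  out _ _ _ _ _ _ f hf g := by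
    obtain ⟨k, hk⟩ := Module.Injective.extension_property R F _ _ f hf (s ∘ₗ g)
    refine ⟨π ∘ₗ k, LinearMap.congr_fun (?_ : (π ∘ₗ k) ∘ₗ f = g)⟩
    rw [LinearMap.comp_assoc, hk, ← LinearMap.comp_assoc, h, LinearMap.id_comp]

/-- A map from a finitely generated ideal to a free module lands in finitely many coordinates,
where it extends because `R` is self-injective. -/
instance Finsupp.instInjectiveOfIsNoetherianRing [IsNoetherianRing R] [Module.Injective R R]
    (ι : Type) : Module.Injective R (ι →₀ R) := by
  classical
  refine Module.Baer.injective fun I g => ?_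
  obtain ⟨S, hS⟩ : (LinearMap.range g).FG := by
    rw [LinearMap.range_eq_map]; exact (IsNoetherian.noetherian ⊤).map g
  let T : Set ι := ↑(S.biUnion Finsupp.support)
  have hT : LinearMap.range g ≤ Finsupp.supported R R T := by
    rw [← hS, Submodule.span_le]
    exact fun f hf => (Finsupp.mem_supported R f).2 (Finset.subset_biUnion_of_mem _ hf)
  let e := (Finsupp.supportedEquivFinsupp (M := R) (R := R) T).trans
    (Finsupp.linearEquivFunOnFinite R R T)
  have : Module.Injective R (Finsupp.supported R R T) :=
    .of_retract e.toLinearMap e.symm.toLinearMap (by ext; simp)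
  obtain ⟨k, hk⟩ := Module.Injective.extension_property R (Finsupp.supported R R T) _ _ I.subtype
    Subtype.val_injective (g.codRestrict _ fun x => hT (LinearMap.mem_range_self g x))
  exact ⟨(Finsupp.supported R R T).subtype ∘ₗ k, fun x hx =>
    congrArg Subtype.val (LinearMap.congr_fun hk ⟨x, hx⟩)⟩

theorem Module.injective_of_projective [IsNoetherianRing R] [Module.Injective R R] (P : Type)
    [AddCommGroup P] [Module R P] [Module.Projective R P] : Module.Injective R P :=
  have ⟨s, hs⟩ := Module.projective_def'.1 ‹_›
  .of_retract s _ hs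

end QuasiFrobenius

section StableEquiv

variable {R : Type} [Ring R] {X Y : Type} [AddCommGroup X] [Module R X] [AddCommGroup Y]
  [Module R Y]

theorem isStableEquiv_fst (N : Type) [AddCommGroup N] [Module R N] [Module.Projective R N] :
    IsStableEquiv R (LinearMap.fst R X N) := by
  refine ⟨LinearMap.inl R X N, ⟨N, _, _, ‹_›, LinearMap.snd R X N, -LinearMap.inr R X N, ?_⟩,
    ⟨N, _, _, ‹_›, 0, 0, ?_⟩⟩ <;> ext <;> simp

/-- The section corrects `g` by a lift of the projective-factoring error `p ∘ g - id`. -/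
theorem IsStableEquiv.exists_comp_eq_id {p : X →ₗ[R] Y} (hp : IsStableEquiv R p)
    (hsurj : Function.Surjective p) : ∃ s : Y →ₗ[R] X, p ∘ₗ s = LinearMap.id := by
  obtain ⟨g, -, P, _, _, _, a, b, hab⟩ := hp
  obtain ⟨b', hb'⟩ := Module.projective_lifting_property p b hsurj
  refine ⟨g - b' ∘ₗ a, ?_⟩
  rw [LinearMap.comp_sub, ← LinearMap.comp_assoc, hb', hab, sub_sub_cancel]

/-- On `ker p` the identity is `-(g ∘ p - id)`, which factors through a projective; the
retraction `id - s ∘ p` onto `ker p` makes `ker p` a direct summand of that projective. -/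
theorem IsStableEquiv.projective_ker {p : X →ₗ[R] Y} (hp : IsStableEquiv R p) {s : Y →ₗ[R] X}
    (hs : p ∘ₗ s = LinearMap.id) : Module.Projective R (LinearMap.ker p) := by
  obtain ⟨g, ⟨P, _, _, _, a, b, hab⟩, -⟩ := hp
  let r : X →ₗ[R] LinearMap.ker p := LinearMap.codRestrict _ (LinearMap.id - s ∘ₗ p) fun x => by
    simp [← LinearMap.comp_apply p s, hs]
  refine .of_split (a ∘ₗ (LinearMap.ker p).subtype) (-(r ∘ₗ b)) ?_
  ext ⟨x, hx⟩
  have hbx : b (a x) = -x := by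
    simpa [LinearMap.mem_ker.1 hx] using LinearMap.congr_fun hab x
  simp [r, hbx, LinearMap.mem_ker.1 hx]

variable {A B : Type*} [AddCommGroup A] [Module R A] [AddCommGroup B] [Module R B]

/-- Correct the lift `s ∘ v` by an extension along `i` of its error on `A`, which lies in
`ker p`. -/
theorem LinearMap.exists_lift_of_injective_ker (p : X →ₗ[R] Y) {s : Y →ₗ[R] X}
    (hs : p ∘ₗ s = LinearMap.id) [Module.Injective R (LinearMap.ker p)] {i : A →ₗ[R] B}
    (hi : Function.Injective i) (u : A →ₗ[R] X) (v : B →ₗ[R] Y) (huv : p ∘ₗ u = v ∘ₗ i) :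
    ∃ w : B →ₗ[R] X, w ∘ₗ i = u ∧ p ∘ₗ w = v := by
  have hps : ∀ y, p (s y) = y := LinearMap.congr_fun hs
  let δ : A →ₗ[R] LinearMap.ker p := LinearMap.codRestrict _ (u - s ∘ₗ v ∘ₗ i) fun x => by
    simp [hps, ← LinearMap.comp_apply p u, huv]
  obtain ⟨k, hk⟩ := Module.Injective.extension_property R _ _ _ i hi δ
  refine ⟨s ∘ₗ v + (LinearMap.ker p).subtype ∘ₗ k, ?_, ?_⟩
  · ext x
    simp [← LinearMap.comp_apply k i, hk, δ]
  · ext y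
    simp [hps]

theorem IsStableEquiv.exists_lift [IsNoetherianRing R] [Module.Injective R R] {p : X →ₗ[R] Y}
    (hp : IsStableEquiv R p) (hsurj : Function.Surjective p) {i : A →ₗ[R] B}
    (hi : Function.Injective i) (u : A →ₗ[R] X) (v : B →ₗ[R] Y) (huv : p ∘ₗ u = v ∘ₗ i) :
    ∃ w : B →ₗ[R] X, w ∘ₗ i = u ∧ p ∘ₗ w = v := by
  obtain ⟨s, hs⟩ := hp.exists_comp_eq_id hsurj
  have := hp.projective_ker hs
  have := Module.injective_of_projective (R := R) (LinearMap.ker p)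
  exact p.exists_lift_of_injective_ker hs hi u v huv

end StableEquiv

theorem IsFiniteAcyclic.wellFounded {V : Type} [Quiver.{1} V] (hV : IsFiniteAcyclic V) :
    WellFounded fun i k : V => Nonempty (i ⟶ k) := by
  obtain ⟨⟨_⟩, -, hcyc⟩ := hV
  let r : V → V → Prop := fun i k => Nonempty (i ⟶ k)
  have hpath : ∀ {i k}, Relation.TransGen r i k → ∃ ρ : Quiver.Path i k, 0 < ρ.length := by
    intro i k h
    induction h with
    | single h => exact ⟨h.some.toPath, by simp⟩
    | tail _ h ih => exact ⟨ih.choose.cons h.some, by simp⟩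
  have : IsTrans V (Relation.TransGen r) := ⟨fun _ _ _ => .trans⟩
  have : Std.Irrefl (Relation.TransGen r) :=
    ⟨fun i hi => (hpath hi).choose_spec.ne' (hcyc i _)⟩
  exact Subrelation.wf (fun h => Relation.TransGen.single (r := r) h)
    (Finite.wellFounded_of_trans_of_irrefl (Relation.TransGen r))

open scoped DirectSum

namespace QuivRep

variable {R : Type} [Ring R] {V : Type} [Quiver.{1} V]

noncomputable def incomingMap (M : QuivRep R V) (j : V) :
    (⨁ a : Σ i : V, i ⟶ j, M.vtx a.1) →ₗ[R] M.vtx j :=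
  letI : DecidableEq (Σ i : V, i ⟶ j) := Classical.decEq _
  DirectSum.toModule R _ _ fun a => (M.arrowMap a.2).hom

theorem isMonic_iff {M : QuivRep R V} : M.IsMonic ↔ ∀ j, Function.Injective (M.incomingMap j) :=
  Iff.rfl

theorem incomingMap_comp_lof (M : QuivRep R V) {j : V} [DecidableEq (Σ i : V, i ⟶ j)]
    (a : Σ i : V, i ⟶ j) :
    M.incomingMap j ∘ₗ DirectSum.lof R _ (fun a : Σ i : V, i ⟶ j => M.vtx a.1) a =
      (M.arrowMap a.2).hom := by
  ext m
  rw [LinearMap.comp_apply, incomingMap]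
  convert DirectSum.toModule_lof R (φ := fun a : Σ i : V, i ⟶ j => (M.arrowMap a.2).hom) a m

theorem hom_ext {A B : QuivRep R V} {f g : A ⟶ B} (h : ∀ k, app f k = app g k) : f = g :=
  NatTrans.ext (funext fun k => ModuleCat.hom_ext (h k))

theorem app_comp_arrowMap {A B : QuivRep R V} (f : A ⟶ B) {i k : V} (a : i ⟶ k) :
    app f k ∘ₗ (A.arrowMap a).hom = (B.arrowMap a).hom ∘ₗ app f i :=
  congrArg ModuleCat.Hom.hom (f.naturality ((Paths.of V).map a))

theorem exists_hom_of_wellFounded (hwf : WellFounded fun i k : V => Nonempty (i ⟶ k))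
    {A B : QuivRep R V} (P : ∀ k, (A.vtx k →ₗ[R] B.vtx k) → Prop)
    (step : ∀ k (f : ∀ a : Σ i : V, i ⟶ k, {g // P a.1 g}), ∃ g, P k g ∧
      ∀ a, g ∘ₗ (A.arrowMap a.2).hom = (B.arrowMap a.2).hom ∘ₗ (f a).1) :
    ∃ f : A ⟶ B, ∀ k, P k (app f k) := by
  choose g hP hcomm using step
  let F : ∀ k, {g // P k g} := hwf.fix fun k ih => ⟨g k fun a => ih a.1 ⟨a.2⟩, hP k _⟩
  have hF : ∀ {i k} (a : i ⟶ k),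
      (F k).1 ∘ₗ (A.arrowMap a).hom = (B.arrowMap a).hom ∘ₗ (F i).1 := by
    intro i k a
    rw [show F k = _ from hwf.fix_eq _ k]
    exact hcomm k _ ⟨i, a⟩
  exact ⟨Paths.liftNatTrans (fun k => ModuleCat.ofHom (F k).1)
    fun a => ModuleCat.hom_ext (hF a), fun k => (F k).2⟩

theorem IsMonic.exists_lift [IsNoetherianRing R] [Module.Injective R R] {M : QuivRep R V}
    (hM : M.IsMonic) (hwf : WellFounded fun i k : V => Nonempty (i ⟶ k)) {X Y : QuivRep R V}
    (p : X ⟶ Y) (hp : ∀ j, Function.Surjective (app p j) ∧ IsStableEquiv R (app p j))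
    (q : M ⟶ Y) : ∃ h : M ⟶ X, h ≫ p = q := by
  classical
  obtain ⟨h, hh⟩ := exists_hom_of_wellFounded hwf (fun k g => app p k ∘ₗ g = app q k)
    fun k f => by
      let ψ : (⨁ a : Σ i : V, i ⟶ k, M.vtx a.1) →ₗ[R] X.vtx k :=
        DirectSum.toModule R _ _ fun a => (X.arrowMap a.2).hom ∘ₗ (f a).1
      have hψ : ∀ a, ψ ∘ₗ DirectSum.lof R _ _ a = (X.arrowMap a.2).hom ∘ₗ (f a).1 :=
        fun a => by ext m; simp [ψ]
      have hpψ : app p k ∘ₗ ψ = app q k ∘ₗ M.incomingMap k :=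
        DirectSum.linearMap_ext R fun a => by
          rw [LinearMap.comp_assoc, LinearMap.comp_assoc, hψ, incomingMap_comp_lof,
            ← LinearMap.comp_assoc, app_comp_arrowMap, LinearMap.comp_assoc, (f a).2,
            app_comp_arrowMap]
      obtain ⟨w, hw, hpw⟩ := (hp k).2.exists_lift (hp k).1 (isMonic_iff.1 hM k) ψ _ hpψ
      refine ⟨w, hpw, fun a => ?_⟩
      rw [← incomingMap_comp_lof, ← LinearMap.comp_assoc, hw, hψ]
  exact ⟨h, hom_ext fun k => hh k⟩

section prodTwist

variable (M : QuivRep R V) (N : Type) [AddCommGroup N] [Module R N]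
  (c : ∀ {i k : V}, (i ⟶ k) → (M.vtx i →ₗ[R] N))

def prodTwist : QuivRep R V :=
  Paths.lift
    { obj := fun k => ModuleCat.of R (M.vtx k × N)
      map := fun a => ModuleCat.ofHom
        (((M.arrowMap a).hom ∘ₗ LinearMap.fst R _ N).prod (c a ∘ₗ LinearMap.fst R _ N)) }

theorem prodTwist_arrowMap {i k : V} (a : i ⟶ k) :
    (M.prodTwist N c).arrowMap a = ModuleCat.ofHom
      (((M.arrowMap a).hom ∘ₗ LinearMap.fst R _ N).prod (c a ∘ₗ LinearMap.fst R _ N)) :=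
  Paths.lift_toPath _ a

def prodTwistFst : M.prodTwist N c ⟶ M :=
  Paths.liftNatTrans (fun k => ModuleCat.ofHom (LinearMap.fst R (M.vtx k) N)) fun a => by
    change (M.prodTwist N c).arrowMap a ≫ _ = _
    rw [prodTwist_arrowMap]
    rfl

theorem app_prodTwistFst (k : V) : app (M.prodTwistFst N c) k = LinearMap.fst R (M.vtx k) N :=
  rfl

variable {M N c}

theorem exists_comp_arrowMap_eq_of_comp_prodTwistFst {h : M ⟶ M.prodTwist N c}
    (hh : h ≫ M.prodTwistFst N c = 𝟙 M) :
    ∃ u : ∀ k, M.vtx k →ₗ[R] N, ∀ {i k} (a : i ⟶ k), u k ∘ₗ (M.arrowMap a).hom = c a := by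
  have hfst : ∀ k m, (app h k m).1 = m := fun k => LinearMap.congr_fun (congrArg (app · k) hh)
  refine ⟨fun k => LinearMap.snd R _ N ∘ₗ app h k, fun {i k} a => LinearMap.ext fun m => ?_⟩
  have hm := LinearMap.congr_fun (app_comp_arrowMap h a) m
  rw [LinearMap.comp_apply, LinearMap.comp_apply, prodTwist_arrowMap] at hm
  change (app h k (M.arrowMap a m)).2 = c a m
  rw [hm]
  exact congrArg (c a) (hfst i m)

end prodTwist

theorem isMonic_of_forall_lift [IsNoetherianRing R] [Module.Injective R R]
    [Module.Injective Rᵐᵒᵖ Rᵐᵒᵖ] {M : QuivRep R V}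
    (hlift : ∀ (X Y : QuivRep R V) (p : X ⟶ Y),
      (∀ j, Function.Surjective (app p j) ∧ IsStableEquiv R (app p j)) →
      ∀ q : M ⟶ Y, ∃ h : M ⟶ X, h ≫ p = q) : M.IsMonic := by
  classical
  refine isMonic_iff.2 fun j => (injective_iff_map_eq_zero (M.incomingMap j)).2 fun z hz => ?_
  by_contra hz0
  obtain ⟨φ, hφ⟩ := exists_linearMap_apply_ne_zero (R := R) hz0
  let c : ∀ {i k : V}, (i ⟶ k) → (M.vtx i →ₗ[R] R) := fun {i k} a =>
    (Pi.single j φ : ∀ k, (⨁ a : Σ i : V, i ⟶ k, M.vtx a.1) →ₗ[R] R) k ∘ₗ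
      DirectSum.lof R (Σ i : V, i ⟶ k) (fun a => M.vtx a.1) ⟨i, a⟩
  obtain ⟨h, hh⟩ := hlift _ _ (M.prodTwistFst R c)
    (fun k => by
      rw [app_prodTwistFst]
      exact ⟨LinearMap.fst_surjective, isStableEquiv_fst R⟩) (𝟙 M)
  obtain ⟨u, hu⟩ := exists_comp_arrowMap_eq_of_comp_prodTwistFst hh
  have huφ : u j ∘ₗ M.incomingMap j = φ := DirectSum.linearMap_ext R fun a => by
    rw [LinearMap.comp_assoc, incomingMap_comp_lof, hu]
    simp [c]
  exact hφ (by rw [← huφ, LinearMap.comp_apply, hz, map_zero])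

end QuivRep

/-- Over a quasi-Frobenius ring and a finite acyclic quiver, a representation `M` is monic if
and only if it has the left lifting property against all morphisms that are pointwise
surjective stable equivalences. -/
theorem isMonic_iff_liftingProperty
    (R : Type) [Ring R] [IsQuasiFrobenius R]
    {V : Type} [Quiver.{1} V] (hV : IsFiniteAcyclic V)
    (M : QuivRep R V) :
    M.IsMonic ↔
      ∀ (X Y : QuivRep R V) (p : X ⟶ Y),
        (∀ j : V, Function.Surjective (QuivRep.app p j) ∧ IsStableEquiv R (QuivRep.app p j)) →
        ∀ q : M ⟶ Y, ∃ h : M ⟶ X, h ≫ p = q :=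
  ⟨fun hM _ _ p hp q => hM.exists_lift hV.wellFounded p hp q, QuivRep.isMonic_of_forall_lift⟩
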